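/- Suppose (S_k^{(G)})_{k=2}^{K+1} are sequences of positive random variables indexed by G with the property that for each k ≥ r+2, S_{k+1}^{(G)}/(L·S_k^{(G)}) → 1 in probability as G → ∞, while for k = r+1, S_{k+1}^{(G)}/S_k^{(G)} → 0 in probability, and for k ≤ r, S_{k+1}^{(G)}/S_k^{(G)} is bounded below in probability by some constant > L/2 > 0. Then the estimator r̂ = argmin_{2≤k≤K} S_{k+1}^{(G)}/S_k^{(G)} - 1 converges in probability to r. -/

import Mathlib

open MeasureTheory Filter Topology

/-!
Call an outcome good when the ratio at `k = r + 1` is at most `1` while every other ratio with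
`2 ≤ k ≤ K` exceeds `1`; on a good outcome `k = r + 1` is the unique argmin. Each of these finitely
many conditions fails with probability tending to `0`: the ratios with `k ≤ r` are eventually above
some `c > L / 2 ≥ 1`, and those with `k ≥ r + 2` are eventually at least `3 L / 4 ≥ 3 / 2`.
A union bound finishes the argument.
-/

lemma mul_one_sub_le_div_of_abs_div_mul_sub_one_le {a b L δ : ℝ} (hL : 0 < L)
    (h : |a / (L * b) - 1| ≤ δ) : L * (1 - δ) ≤ a / b := by
  have hclose : 1 - δ ≤ a / (L * b) := by linarith [(abs_le.mp h).1]
  calc L * (1 - δ) ≤ L * (a / (L * b)) := by gcongr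
    _ = a / b := by rw [← mul_div_assoc, mul_div_mul_left a b hL.ne']

section MeasureAsymptotics

variable {α Ω : Type*} [MeasurableSpace Ω] {μ : α → Measure Ω} {l : Filter α}

lemma tendsto_measure_zero_of_subset {s t : α → Set Ω} (hst : ∀ a, s a ⊆ t a)
    (ht : Tendsto (fun a => μ a (t a)) l (𝓝 0)) : Tendsto (fun a => μ a (s a)) l (𝓝 0) :=
  tendsto_of_tendsto_of_tendsto_of_le_of_le tendsto_const_nhds ht (fun _ => zero_le)
    fun a => measure_mono (hst a)

lemma tendsto_measure_union_zero {s t : α → Set Ω} (hs : Tendsto (fun a => μ a (s a)) l (𝓝 0))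
    (ht : Tendsto (fun a => μ a (t a)) l (𝓝 0)) :
    Tendsto (fun a => μ a (s a ∪ t a)) l (𝓝 0) := by
  refine tendsto_of_tendsto_of_tendsto_of_le_of_le tendsto_const_nhds ?_ (fun _ => zero_le)
    fun a => measure_union_le (s a) (t a)
  simpa using hs.add ht

lemma tendsto_measure_one_of_tendsto_measure_compl_zero [∀ a, IsProbabilityMeasure (μ a)]
    {s : α → Set Ω} (hs : Tendsto (fun a => μ a (s a)ᶜ) l (𝓝 0)) :
    Tendsto (fun a => μ a (s a)) l (𝓝 1) := by
  have hlower : Tendsto (fun a => 1 - μ a (s a)ᶜ) l (𝓝 1) := by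
    simpa using ENNReal.Tendsto.sub tendsto_const_nhds hs (Or.inl ENNReal.one_ne_top)
  refine tendsto_of_tendsto_of_tendsto_of_le_of_le hlower tendsto_const_nhds (fun a => ?_)
    fun a => prob_le_one
  rw [tsub_le_iff_right, ← measure_univ (μ := μ a), ← Set.union_compl_self (s a)]
  exact measure_union_le _ _

lemma tendsto_measure_forall_finset_one [∀ a, IsProbabilityMeasure (μ a)] {ι : Type*}
    (s : Finset ι) (P : ι → α → Ω → Prop)
    (hP : ∀ i ∈ s, Tendsto (fun a => μ a {ω | ¬ P i a ω}) l (𝓝 0)) :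
    Tendsto (fun a => μ a {ω | ∀ i ∈ s, P i a ω}) l (𝓝 1) := by
  refine tendsto_measure_one_of_tendsto_measure_compl_zero ?_
  have hunion : Tendsto (fun a => ∑ i ∈ s, μ a {ω | ¬ P i a ω}) l (𝓝 0) := by
    simpa using tendsto_finsetSum s hP
  refine tendsto_of_tendsto_of_tendsto_of_le_of_le tendsto_const_nhds hunion (fun _ => zero_le)
    fun a => le_trans (measure_mono fun ω hω => ?_) (measure_biUnion_finset_le s _)
  simpa using hω

lemma tendsto_measure_not_lt_zero {X Y : α → Ω → ℝ} {t : ℝ}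
    (hX : Tendsto (fun a => μ a {ω | t < X a ω}) l (𝓝 0))
    (hY : Tendsto (fun a => μ a {ω | Y a ω ≤ t}) l (𝓝 0)) :
    Tendsto (fun a => μ a {ω | ¬ X a ω < Y a ω}) l (𝓝 0) := by
  refine tendsto_measure_zero_of_subset (fun a ω (hω : ¬ X a ω < Y a ω) => ?_)
    (tendsto_measure_union_zero hX hY)
  by_contra hsep
  simp only [Set.mem_union, Set.mem_ofPred_eq, not_or, not_lt, not_le] at hsep
  exact hω (hsep.1.trans_lt hsep.2)

lemma tendsto_measure_div_le_zero_of_tendsto_measure_abs_div_mul_sub_one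
    {X Y : α → Ω → ℝ} {L δ t : ℝ} (hL : 0 < L) (ht : t < L * (1 - δ))
    (h : Tendsto (fun a => μ a {ω | δ < |X a ω / (L * Y a ω) - 1|}) l (𝓝 0)) :
    Tendsto (fun a => μ a {ω | X a ω / Y a ω ≤ t}) l (𝓝 0) := by
  refine tendsto_measure_zero_of_subset (fun a ω (hω : X a ω / Y a ω ≤ t) => ?_) h
  by_contra hclose
  have := mul_one_sub_le_div_of_abs_div_mul_sub_one_le hL (not_lt.mp hclose)
  linarith

end MeasureAsymptotics

theorem order_estimator_consistent_general {Ω : Type*} [MeasurableSpace Ω]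
    (μ : ℕ → Measure Ω) (hprob : ∀ G, IsProbabilityMeasure (μ G))
    (S : ℕ → ℕ → Ω → ℝ)
    (L : ℝ) (hL : 2 ≤ L) (K r : ℕ)
    (htail : ∀ k, r + 2 ≤ k → k ≤ K → ∀ δ > (0 : ℝ),
      Tendsto (fun G => μ G {ω | δ < |S G (k + 1) ω / (L * S G k ω) - 1|})
        atTop (nhds 0))
    (hdrop : ∀ δ > (0 : ℝ),
      Tendsto (fun G => μ G {ω | δ < S G (r + 2) ω / S G (r + 1) ω})
        atTop (nhds 0))
    (hlow : ∀ k, 2 ≤ k → k ≤ r → ∃ c : ℝ, L / 2 < c ∧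
      Tendsto (fun G => μ G {ω | S G (k + 1) ω / S G k ω < c}) atTop (nhds 0)) :
    Tendsto (fun G => μ G {ω | ∀ k, 2 ≤ k → k ≤ K → k ≠ r + 1 →
        S G (r + 2) ω / S G (r + 1) ω < S G (k + 1) ω / S G k ω})
      atTop (nhds 1) := by
  have := hprob
  have hratio_gt_one : ∀ k, 2 ≤ k → k ≤ K → k ≠ r + 1 →
      Tendsto (fun G => μ G {ω | S G (k + 1) ω / S G k ω ≤ 1}) atTop (𝓝 0) := by
    intro k hk2 hkK hkr
    rcases hkr.lt_or_gt with hkr | hkr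
    · obtain ⟨c, hLc, hc⟩ := hlow k hk2 (by omega)
      exact tendsto_measure_zero_of_subset
        (fun G ω hω => lt_of_le_of_lt hω (by linarith : (1 : ℝ) < c)) hc
    · exact tendsto_measure_div_le_zero_of_tendsto_measure_abs_div_mul_sub_one (δ := 1 / 4)
        (by linarith) (by linarith) (htail k (by omega) hkK _ (by norm_num))
  have hmin : ∀ k ∈ (Finset.Icc 2 K).filter (· ≠ r + 1), Tendsto (fun G => μ G
      {ω | ¬ S G (r + 2) ω / S G (r + 1) ω < S G (k + 1) ω / S G k ω}) atTop (𝓝 0) := by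
    intro k hk
    simp only [Finset.mem_filter, Finset.mem_Icc] at hk
    exact tendsto_measure_not_lt_zero (hdrop 1 one_pos) (hratio_gt_one k hk.1.1 hk.1.2 hk.2)
  simpa only [Finset.mem_filter, Finset.mem_Icc, and_imp] using
    tendsto_measure_forall_finset_one _ _ hmin

/-- Consistency of the Markov order estimator r̂ = argmin_{2≤k≤K} S_{k+1}/S_k - 1:
under the stated in-probability behaviour of the ratios, the probability that the
ratio at k = r+1 is the unique minimum over 2 ≤ k ≤ K tends to one, i.e. r̂ → r
in probability. -/
theorem order_estimator_consistent {Ω : Type*} [MeasurableSpace Ω]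
    (μ : ℕ → Measure Ω) (hprob : ∀ G, IsProbabilityMeasure (μ G))
    (S : ℕ → ℕ → Ω → ℝ) (hmeas : ∀ G k, Measurable (S G k))
    (hpos : ∀ G k ω, 0 < S G k ω)
    (L : ℝ) (hL : 2 ≤ L) (K r : ℕ) (hr : 1 ≤ r) (hrK : r + 2 ≤ K)
    (htail : ∀ k, r + 2 ≤ k → k ≤ K → ∀ δ > (0 : ℝ),
      Tendsto (fun G => μ G {ω | δ < |S G (k + 1) ω / (L * S G k ω) - 1|})
        atTop (nhds 0))
    (hdrop : ∀ δ > (0 : ℝ),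
      Tendsto (fun G => μ G {ω | δ < S G (r + 2) ω / S G (r + 1) ω})
        atTop (nhds 0))
    (hlow : ∀ k, 2 ≤ k → k ≤ r → ∃ c : ℝ, L / 2 < c ∧
      Tendsto (fun G => μ G {ω | S G (k + 1) ω / S G k ω < c}) atTop (nhds 0)) :
    Tendsto (fun G => μ G {ω | ∀ k, 2 ≤ k → k ≤ K → k ≠ r + 1 →
        S G (r + 2) ω / S G (r + 1) ω < S G (k + 1) ω / S G k ω})
      atTop (nhds 1) :=
  order_estimator_consistent_general μ hprob S L hL K r htail hdrop hlow
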